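/- Let C be the subgroup of Q8⁴ generated by (a,a,a,a), (b,ab,b,ab), (a²,1,a,a³). Then C is isomorphic to a semidirect product Z4 ⋊ Q8; in particular its center equals its set of elements of order at most 2, which is isomorphic to Z2², and [C : Z(C)] = 8. -/
import Mathlib


/-- `Q8` is the quaternion group of order 8. -/
abbrev Q8 := QuaternionGroup 2

/-- The Gray map of `Q8`: `1 ↦ 0000`, `a ↦ 0101`, `a² ↦ 1111`, `a³ ↦ 1010`,
`b ↦ 0110`, `ab ↦ 1100`, `a²b ↦ 1001`, `a³b ↦ 0011`.
(In `QuaternionGroup 2` one has `aᵏ·b = xa (-k)`.) -/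
def grayQ : Q8 → Fin 4 → ZMod 2
  | .a i => ![![0,0,0,0], ![0,1,0,1], ![1,1,1,1], ![1,0,1,0]] i
  | .xa i => ![![0,1,1,0], ![0,0,1,1], ![1,0,0,1], ![1,1,0,0]] i

/-- `z₁ = (a,a,a,a)`. -/
def z1 : Fin 4 → Q8 := ![QuaternionGroup.a 1, QuaternionGroup.a 1, QuaternionGroup.a 1, QuaternionGroup.a 1]

/-- `z₂ = (b,ab,b,ab)`. -/
def z2 : Fin 4 → Q8 := ![QuaternionGroup.xa 0, QuaternionGroup.a 1 * QuaternionGroup.xa 0,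
  QuaternionGroup.xa 0, QuaternionGroup.a 1 * QuaternionGroup.xa 0]

/-- `z₃ = (a²,1,a,a³)`. -/
def z3 : Fin 4 → Q8 := ![QuaternionGroup.a 2, 1, QuaternionGroup.a 1, QuaternionGroup.a 3]

/-- The subgroup `⟨z₁,z₂,z₃⟩` of `Q8⁴`. -/
def C15 : Subgroup (Fin 4 → Q8) := Subgroup.closure {z1, z2, z3}


def sig : Q8 → Q8
  | .a i => .a i
  | .xa i => .xa (i + 3)

def rho : Q8 →* (Fin 4 → Q8) where
  toFun q := ![q, sig q, q, sig q]
  map_one' := by decide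
  map_mul' := by decide

def f1 : Multiplicative (ZMod 4) →* (Fin 4 → Q8) where
  toFun n := z3 ^ (Multiplicative.toAdd n).val
  map_one' := by decide
  map_mul' := by decide

def phi : Q8 →* MulAut (Multiplicative (ZMod 4)) where
  toFun q := match q with
    | .a _ => 1
    | .xa _ => MulEquiv.inv (Multiplicative (ZMod 4))
  map_one' := rfl
  map_mul' := by intro p q; ext x; revert x p q; decide

lemma compat : ∀ (g : Q8) (n : Multiplicative (ZMod 4)),
    f1 ((phi g) n) = rho g * f1 n * (rho g)⁻¹ := by decide

def Phi : SemidirectProduct (Multiplicative (ZMod 4)) Q8 phi →* (Fin 4 → Q8) :=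
  SemidirectProduct.lift f1 rho (fun g => MonoidHom.ext fun n => compat g n)

lemma Phi_mk (n : Multiplicative (ZMod 4)) (q : Q8) :
    Phi ⟨n, q⟩ = z3 ^ (Multiplicative.toAdd n).val * rho q := rfl

lemma rho_mem (q : Q8) : rho q ∈ C15 := by
  have hz1 : z1 ∈ C15 := Subgroup.subset_closure (by simp)
  have hz2 : z2 ∈ C15 := Subgroup.subset_closure (by simp)
  rcases q with i | i
  · have : rho (.a i) = z1 ^ i.val := by revert i; decide
    rw [this]; exact pow_mem hz1 _
  · have : rho (.xa i) = z1 ^ (-i).val * z2 := by revert i; decide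
    rw [this]; exact mul_mem (pow_mem hz1 _) hz2

lemma range_eq : Phi.range = C15 := by
  apply le_antisymm
  · rintro - ⟨⟨n, q⟩, rfl⟩
    rw [Phi_mk]
    exact mul_mem (pow_mem (Subgroup.subset_closure (by simp [z3])) _) (rho_mem q)
  · rw [C15, Subgroup.closure_le]
    rintro x (rfl | rfl | rfl)
    · exact ⟨⟨1, .a 1⟩, by decide⟩
    · exact ⟨⟨1, .xa 0⟩, by decide⟩
    · exact ⟨⟨Multiplicative.ofAdd 1, 1⟩, by decide⟩

lemma Phi_inj : Function.Injective Phi := by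
  rw [injective_iff_map_eq_one]
  rintro ⟨n, q⟩ h
  rw [Phi_mk] at h
  have : n = 1 ∧ q = 1 := by revert h; revert n q; decide
  rw [this.1, this.2]; rfl

lemma memC15_iff (x : Fin 4 → Q8) :
    x ∈ C15 ↔ ∃ (n : ZMod 4) (q : Q8), x = z3 ^ n.val * rho q := by
  rw [← range_eq]
  constructor
  · rintro ⟨⟨n, q⟩, rfl⟩; exact ⟨Multiplicative.toAdd n, q, rfl⟩
  · rintro ⟨n, q, rfl⟩; exact ⟨⟨Multiplicative.ofAdd n, q⟩, rfl⟩

lemma Lcomm : ∀ (n m : ZMod 4) (q r : Q8), (z3 ^ n.val * rho q) ^ 2 = 1 →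
    (z3 ^ n.val * rho q) * (z3 ^ m.val * rho r) = (z3 ^ m.val * rho r) * (z3 ^ n.val * rho q) := by
  decide

lemma Lsq : ∀ (n : ZMod 4) (q : Q8),
    (∀ (m : ZMod 4) (r : Q8), (z3 ^ n.val * rho q) * (z3 ^ m.val * rho r) = (z3 ^ m.val * rho r) * (z3 ^ n.val * rho q)) →
    (z3 ^ n.val * rho q) ^ 2 = 1 := by
  decide

lemma Lfour : ∀ (n : ZMod 4) (q : Q8), (z3 ^ n.val * rho q) ^ 2 = 1 →
    (z3 ^ n.val * rho q = 1 ∨ (z3 ^ n.val * rho q = fun _ => QuaternionGroup.a 2) ∨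
     z3 ^ n.val * rho q = ![1,1,.a 2,.a 2] ∨ z3 ^ n.val * rho q = ![.a 2,.a 2,1,1]) := by
  decide

/-- `C = ⟨(a,a,a,a),(b,ab,b,ab),(a²,1,a,a³)⟩ ≤ Q8⁴` is isomorphic to a semidirect
product `Z4 ⋊ Q8`; its center equals its set of elements of order at most 2, which
has 4 elements, and `[C : Z(C)] = 8` (as `|C| = 32`). -/
theorem structure_of_C15 :
    (∃ φ : Q8 →* MulAut (Multiplicative (ZMod 4)),
      Nonempty (C15 ≃* SemidirectProduct (Multiplicative (ZMod 4)) Q8 φ)) ∧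
    (∀ x ∈ C15, (x ^ 2 = 1 ↔ ∀ y ∈ C15, x * y = y * x)) ∧
    {x ∈ (C15 : Set (Fin 4 → Q8)) | x ^ 2 = 1}.ncard = 4 ∧
    Nat.card C15 = 32 := by
  have e : SemidirectProduct (Multiplicative (ZMod 4)) Q8 phi ≃* C15 :=
    (MonoidHom.ofInjective Phi_inj).trans (MulEquiv.subgroupCongr range_eq)
  refine ⟨⟨phi, ⟨e.symm⟩⟩, ?_, ?_, ?_⟩
  · intro x hx
    obtain ⟨n, q, rfl⟩ := (memC15_iff x).1 hx
    constructor
    · intro h y hy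
      obtain ⟨m, r, rfl⟩ := (memC15_iff y).1 hy
      exact Lcomm n m q r h
    · intro h
      exact Lsq n q (fun m r => h _ ((memC15_iff _).2 ⟨m, r, rfl⟩))
  · have hset : {x ∈ (C15 : Set (Fin 4 → Q8)) | x ^ 2 = 1} =
        ↑({1, fun _ => QuaternionGroup.a 2, ![1,1,.a 2,.a 2], ![.a 2,.a 2,1,1]} : Finset (Fin 4 → Q8)) := by
      ext x
      simp only [Set.mem_setOf_eq, Finset.coe_insert, Set.mem_insert_iff, Finset.coe_singleton,
        Set.mem_singleton_iff, SetLike.mem_coe]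
      constructor
      · rintro ⟨hx, hsq⟩
        obtain ⟨n, q, rfl⟩ := (memC15_iff x).1 hx
        exact Lfour n q hsq
      · rintro (rfl | rfl | rfl | rfl) <;>
          exact ⟨(memC15_iff _).2 (by first
            | exact ⟨0, 1, by decide⟩
            | exact ⟨0, .a 2, by decide⟩
            | exact ⟨2, 1, by decide⟩
            | exact ⟨2, .a 2, by decide⟩), by decide⟩
    rw [hset, Set.ncard_coe_finset]
    decide
  · rw [← Nat.card_congr e.toEquiv]
    have : Nat.card (SemidirectProduct (Multiplicative (ZMod 4)) Q8 phi) =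
        Nat.card (Multiplicative (ZMod 4) × Q8) :=
      Nat.card_congr ⟨fun g => (g.left, g.right), fun p => ⟨p.1, p.2⟩, fun g => rfl, fun p => rfl⟩
    rw [this]
    simp only [Nat.card_eq_fintype_card, Fintype.card_prod]
    decide
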